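/- arXiv:1502.05200 — 2 statements merged into one kernel-verified Lean document; each statement's English description precedes it below -/
import Mathlib

section
/- Let 𝔥 be a real Lie subalgebra of the n×n complex matrices (under the commutator bracket) and let X₁, …, X_N be a basis of 𝔥 as a real vector space. Then there is a neighbourhood U of 0 in the n×n complex matrices such that for every Y ∈ 𝔥 ∩ U there exist real numbers τ₁, …, τ_N with exp(Y) = exp(τ₁·X₁) · exp(τ₂·X₂) · ⋯ · exp(τ_N·X_N) (the product taken in this fixed order). -/
/-!
Write `Φ(σ) = exp (σ₁ • X₁) * ⋯ * exp (σ_N • X_N)`. Its logarithmic derivative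
`Φ(σ)⁻¹ ∂ᵢΦ(σ) = wᵢ(σ)` is `Xᵢ` conjugated by the factors to the right of the `i`-th one.
Conjugation by `exp A` is the operator exponential of `-ad A`, so it preserves the closed subspace
`𝔥`; hence every `wᵢ(σ)` lies in `𝔥`, and `wᵢ(0) = Xᵢ`. The coordinates `M(σ)` of the frame
`(wᵢ(σ))ᵢ` in the basis `(Xᵢ)ᵢ` are therefore invertible near `0`, and for `Y ∈ 𝔥` with small
coordinates `y` the ODE `σ' = M(σ)⁻¹ y`, `σ(0) = 0`, has a solution on `[0, 1]` that stays near `0`.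
Along it `(Φ ∘ σ)' = (Φ ∘ σ) * Y`, so `Φ(σ(1)) = exp Y`.
-/

open NormedSpace Set Filter Topology Metric

noncomputable section

section ODE

variable {V : Type*} [NormedAddCommGroup V] [NormedSpace ℝ V]

theorem mem_closedBall_of_hasDerivWithinAt {v : V → V} {σ : ℝ → V} {a : ℝ} (ha : 0 ≤ a)
    (hσ : ∀ t ∈ Icc (0 : ℝ) 1, HasDerivWithinAt σ (v (σ t)) (Icc 0 1) t)
    (hv : ∀ x ∈ closedBall (σ 0) a, ‖v x‖ < a) :
    ∀ t ∈ Icc (0 : ℝ) 1, σ t ∈ closedBall (σ 0) a := by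
  have hdist : ∀ t ∈ Icc (0 : ℝ) 1, ‖σ t - σ 0‖ ≤ a * t := by
    refine image_norm_le_of_norm_deriv_right_lt_deriv_boundary (f := fun t => σ t - σ 0)
      (fun t ht => (hσ t ht).continuousWithinAt.sub continuousWithinAt_const)
      (fun t ht => ((hσ t (Ico_subset_Icc_self ht)).mono_of_mem_nhdsWithin
        (Icc_mem_nhdsGE_of_mem ht)).sub_const (σ 0)) (by simp)
      (fun t => by simpa using (hasDerivAt_id t).const_mul a) fun t ht hnorm => hv _ ?_
    rw [mem_closedBall, dist_eq_norm, hnorm]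
    exact mul_le_of_le_one_right ha ht.2.le
  intro t ht
  rw [mem_closedBall, dist_eq_norm]
  exact (hdist t ht).trans (mul_le_of_le_one_right ha ht.2)

theorem eventually_exists_hasDerivWithinAt_apply [CompleteSpace V] {A : V → V →L[ℝ] V}
    (hA : ContDiffAt ℝ 1 A 0) {s : Set V} (hs : s ∈ 𝓝 0) :
    ∀ᶠ y in 𝓝 0, ∃ σ : ℝ → V, σ 0 = 0 ∧
      ∀ t ∈ Icc (0 : ℝ) 1, σ t ∈ s ∧ HasDerivWithinAt σ (A (σ t) y) (Icc 0 1) t := by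
  obtain ⟨K, u, hu, hlip⟩ := hA.exists_lipschitzOnWith
  set C := ‖A 0‖ + 1
  have hC : ∀ᶠ x in 𝓝 0, ‖A x‖ < C := hA.continuousAt.norm.eventually (gt_mem_nhds (lt_add_one _))
  obtain ⟨a, ha, hball⟩ := nhds_basis_closedBall.mem_iff.1 (inter_mem hs (inter_mem hu hC))
  filter_upwards [ball_mem_nhds 0 (show 0 < a / C by positivity)] with y hy
  have hv : ∀ x ∈ closedBall (0 : V) a, ‖A x y‖ < a := by
    intro x hx
    rw [mem_ball_zero_iff, lt_div_iff₀ (by positivity)] at hy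
    calc ‖A x y‖ ≤ ‖A x‖ * ‖y‖ := (A x).le_opNorm y
      _ ≤ C * ‖y‖ := by gcongr; exact (hball hx).2.2.le
      _ < a := by linarith
  have hPL : IsPicardLindelof (fun _ x => A x y) (tmin := 0) (tmax := 1)
      ⟨0, left_mem_Icc.2 zero_le_one⟩ 0 ⟨a, ha.le⟩ 0 ⟨a, ha.le⟩
      (‖ContinuousLinearMap.apply ℝ V y‖₊ * K) :=
    .of_time_independent (fun x hx => (hv x hx).le)
      ((ContinuousLinearMap.apply ℝ V y).lipschitz.comp_lipschitzOnWith
        (hlip.mono fun x hx => (hball hx).2.1))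
      (by simp)
  obtain ⟨σ, hσ0 : σ 0 = 0, hσ⟩ := hPL.exists_eq_forall_mem_Icc_hasDerivWithinAt₀
  refine ⟨σ, hσ0, fun t ht => ⟨(hball ?_).1, hσ t ht⟩⟩
  have := mem_closedBall_of_hasDerivWithinAt ha.le hσ (hσ0 ▸ hv) t ht
  rwa [hσ0] at this

theorem eventually_exists_hasDerivWithinAt_sum_smul_eq {E : Type*} [NormedAddCommGroup E]
    [NormedSpace ℝ E] {N : ℕ} {𝔥 : Submodule ℝ E} {P : E →L[ℝ] Fin N → ℝ} (hP : InjOn P 𝔥)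
    {w : Fin N → (Fin N → ℝ) → E} (hw : ∀ i σ, w i σ ∈ 𝔥) (hwC : ∀ i, ContDiff ℝ 1 (w i))
    (hw0 : ∀ i, P (w i 0) = Pi.single i 1) :
    ∀ᶠ Y in 𝓝 0, Y ∈ 𝔥 → ∃ σ : ℝ → Fin N → ℝ, σ 0 = 0 ∧ ∀ t ∈ Icc (0 : ℝ) 1,
      ∃ σ', HasDerivWithinAt σ σ' (Icc 0 1) t ∧ ∑ i, σ' i • w i (σ t) = Y := by
  set M : (Fin N → ℝ) → (Fin N → ℝ) →L[ℝ] Fin N → ℝ := fun σ =>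
    ∑ i, (ContinuousLinearMap.proj i).smulRight (P (w i σ))
  have hM : ∀ σ c, M σ c = P (∑ i, c i • w i σ) := fun σ c => by simp [M]
  have hM0 : M 0 = 1 := by
    ext c j
    simp [hM, hw0, Pi.single_apply]
  have hMC : ContDiff ℝ 1 M :=
    ContDiff.sum fun i _ => contDiff_const.smulRight (P.contDiff.comp (hwC i))
  have hA : ContDiffAt ℝ 1 (fun σ => Ring.inverse (M σ)) 0 :=
    (hM0 ▸ contDiffAt_ringInverse ℝ 1 : ContDiffAt ℝ 1 Ring.inverse (M 0)).comp 0 hMC.contDiffAt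
  have hunit : {σ | IsUnit (M σ)} ∈ 𝓝 0 :=
    hMC.continuous.continuousAt.preimage_mem_nhds (Units.isOpen.mem_nhds (by simp [hM0]))
  filter_upwards [(P.continuous.tendsto' 0 0 (map_zero P)).eventually
    (eventually_exists_hasDerivWithinAt_apply hA hunit)] with Y ⟨σ, hσ0, hσ⟩ hY
  refine ⟨σ, hσ0, fun t ht =>
    ⟨_, (hσ t ht).2, hP (𝔥.sum_mem fun i _ => 𝔥.smul_mem _ (hw i _)) hY ?_⟩⟩
  rw [← hM, ← mul_apply_eq_comp, Ring.mul_inverse_cancel _ (hσ t ht).1, one_apply_eq_self]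

end ODE

theorem Submodule.exp_apply_mem {F : Type*} [NormedAddCommGroup F] [NormedSpace ℝ F]
    [CompleteSpace F] (V : Submodule ℝ F) (hV : IsClosed (V : Set F))
    {T : F →L[ℝ] F} (hT : ∀ z ∈ V, T z ∈ V) {z : F} (hz : z ∈ V) : exp T z ∈ V := by
  have hpow : ∀ n : ℕ, (T ^ n) z ∈ V := by
    intro n
    induction n with
    | zero => simpa using hz
    | succ n ih => rw [pow_succ', mul_apply_eq_comp]; exact hT _ ih
  have hsum : HasSum (fun n : ℕ => (n.factorial⁻¹ : ℝ) • (T ^ n) z) (exp T z) := by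
    rw [exp_eq_tsum ℝ]
    exact ((expSeries_summable' (𝕂 := ℝ) T).hasSum.mapL (ContinuousLinearMap.apply ℝ F z))
  exact hV.mem_of_tendsto hsum.tendsto_sum_nat
    (Eventually.of_forall fun k => V.sum_mem fun n _ => V.smul_mem _ (hpow n))

section BanachAlgebra

variable {E : Type*} [NormedRing E] [NormedAlgebra ℝ E] {N : ℕ}

def expProd (X : Fin N → E) (σ : Fin N → ℝ) : E :=
  (List.ofFn fun i => exp (σ i • X i)).prod

theorem expProd_succ (X : Fin (N + 1) → E) (σ : Fin (N + 1) → ℝ) :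
    expProd X σ = exp (σ 0 • X 0) * expProd (Fin.tail X) (Fin.tail σ) := by
  simp [expProd, List.ofFn_succ, Fin.tail]

@[simp]
theorem expProd_zero (X : Fin N → E) : expProd X 0 = 1 := by
  simp [expProd]

-- `X i` conjugated by the factors of `expProd X σ` right of the `i`-th one, whose product is
-- `expProd X` with the other coefficients set to `0`.
def expProdFrame (X : Fin N → E) (i : Fin N) (σ : Fin N → ℝ) : E :=
  Ring.inverse (expProd X fun j => if i < j then σ j else 0) * X i *
    expProd X fun j => if i < j then σ j else 0

theorem expProdFrame_zero_left (X : Fin (N + 1) → E) (σ : Fin (N + 1) → ℝ) :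
    expProdFrame X 0 σ = Ring.inverse (expProd (Fin.tail X) (Fin.tail σ)) * X 0 *
      expProd (Fin.tail X) (Fin.tail σ) := by
  have htail : Fin.tail (fun j => if (0 : Fin (N + 1)) < j then σ j else 0) = Fin.tail σ :=
    funext fun j => by simp [Fin.tail, Fin.succ_pos]
  simp only [expProdFrame, expProd_succ, htail, lt_irrefl, if_false, zero_smul, exp_zero, one_mul]

theorem expProdFrame_succ (X : Fin (N + 1) → E) (i : Fin N) (σ : Fin (N + 1) → ℝ) :
    expProdFrame X i.succ σ = expProdFrame (Fin.tail X) i (Fin.tail σ) := by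
  have htail : Fin.tail (fun j => if i.succ < j then σ j else 0) =
      fun j => if i < j then Fin.tail σ j else 0 :=
    funext fun j => by simp only [Fin.tail, Fin.succ_lt_succ_iff]
  simp only [expProdFrame, expProd_succ, htail, Fin.not_lt_zero, if_false, zero_smul, exp_zero,
    one_mul]
  rfl

@[simp]
theorem expProdFrame_zero_right (X : Fin N → E) (i : Fin N) : expProdFrame X i 0 = X i := by
  have hzero : (fun _ : Fin N => (0 : ℝ)) = 0 := rfl
  simp [expProdFrame, hzero]

-- `NormedSpace.exp` is defined with `ℚ`-scalars, and its algebraic lemmas ask for a normed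
-- `ℚ`-algebra.
local instance : NormedAlgebra ℚ E := NormedAlgebra.restrictScalars ℚ ℝ E

variable [CompleteSpace E]

theorem exp_neg_mul_mul_exp (A B : E) :
    exp (-A) * B * exp A =
      exp ((ContinuousLinearMap.mul ℝ E).flip A - ContinuousLinearMap.mul ℝ E A) B := by
  set T := (ContinuousLinearMap.mul ℝ E).flip A - ContinuousLinearMap.mul ℝ E A
  set f : ℝ → E := fun t => exp (t • -A) * B * exp (t • A)
  have hT : ∀ z, T z = z * A - A * z := fun z => by simp [T]
  have hf : ∀ t, HasDerivAt f (T (f t)) t := by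
    intro t
    refine (((hasDerivAt_exp_smul_const' (-A) t).mul_const B).mul
      (hasDerivAt_exp_smul_const A t)).congr_deriv ?_
    rw [hT]
    simp only [f]
    noncomm_ring
  have hconst : ∀ t, HasDerivAt (fun t => exp (t • -T) (f t)) 0 t := by
    intro t
    refine ((hasDerivAt_exp_smul_const (-T) t).clm_apply (hf t)).congr_deriv ?_
    rw [mul_apply_eq_comp, ← map_add]
    simp
  have h1 : exp (-T) (f 1) = B := by
    have := is_const_of_deriv_eq_zero (fun t => (hconst t).differentiableAt)
      (fun t => (hconst t).deriv) 1 0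
    simpa [f] using this
  have h2 : exp T * exp (-T) = 1 := by
    rw [← exp_add_of_commute (Commute.refl T).neg_right, add_neg_cancel, exp_zero]
  calc exp (-A) * B * exp A = f 1 := by simp [f]
    _ = exp T (exp (-T) (f 1)) := by rw [← mul_apply_eq_comp, h2]; rfl
    _ = exp T B := by rw [h1]

theorem exp_neg_mul_mul_exp_mem {𝔥 : Submodule ℝ E} (hcl : IsClosed (𝔥 : Set E))
    (h𝔥 : ∀ x ∈ 𝔥, ∀ y ∈ 𝔥, x * y - y * x ∈ 𝔥) {A B : E} (hA : A ∈ 𝔥) (hB : B ∈ 𝔥) :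
    exp (-A) * B * exp A ∈ 𝔥 := by
  rw [exp_neg_mul_mul_exp]
  exact 𝔥.exp_apply_mem hcl (fun z hz => by simpa using h𝔥 z hz A hA) hB

theorem eq_exp_of_hasDerivWithinAt_mul {g : ℝ → E} {Y : E} (hg0 : g 0 = 1)
    (hg : ∀ t ∈ Icc (0 : ℝ) 1, HasDerivWithinAt g (g t * Y) (Icc 0 1) t) : g 1 = exp Y := by
  have hconst : ∀ t ∈ Icc (0 : ℝ) 1,
      HasDerivWithinAt (fun t => g t * exp (t • -Y)) 0 (Icc 0 1) t := fun t ht =>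
    ((hg t ht).mul (hasDerivAt_exp_smul_const' (-Y) t).hasDerivWithinAt).congr_deriv
      (by noncomm_ring)
  have h1 : g 1 * exp (-Y) = 1 := by
    have := norm_image_sub_le_of_norm_deriv_le_segment' hconst (C := 0) (by simp) 1
      (right_mem_Icc.2 zero_le_one)
    simpa [hg0, sub_eq_zero] using this
  calc g 1 = g 1 * exp (-Y) * exp Y := by
        rw [mul_assoc, ← Ring.inverse_exp, Ring.inverse_mul_cancel _ (isUnit_exp Y), mul_one]
    _ = exp Y := by rw [h1, one_mul]

theorem isUnit_expProd (X : Fin N → E) (σ : Fin N → ℝ) : IsUnit (expProd X σ) :=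
  List.prod_isUnit fun _ h => by
    obtain ⟨i, rfl⟩ := List.mem_ofFn.1 h
    exact isUnit_exp _

theorem contDiff_expProd (X : Fin N → E) {n : WithTop ℕ∞} : ContDiff ℝ n (expProd X) := by
  induction N with
  | zero =>
    rw [show expProd X = fun _ => 1 from funext fun σ => by simp [expProd]]
    exact contDiff_const
  | succ N ih =>
    rw [show expProd X = _ from funext (expProd_succ X)]
    exact ((AnalyticOnNhd.contDiff fun x _ => exp_analytic x).comp
      ((contDiff_apply ℝ ℝ 0).smul contDiff_const)).mul
      ((ih _).comp (contDiff_pi.2 fun j => contDiff_apply ℝ ℝ j.succ))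

theorem inverse_expProd_mul_mul_expProd_mem {𝔥 : Submodule ℝ E} (hcl : IsClosed (𝔥 : Set E))
    (h𝔥 : ∀ x ∈ 𝔥, ∀ y ∈ 𝔥, x * y - y * x ∈ 𝔥) {X : Fin N → E} (hX : ∀ i, X i ∈ 𝔥)
    (σ : Fin N → ℝ) {B : E} (hB : B ∈ 𝔥) :
    Ring.inverse (expProd X σ) * B * expProd X σ ∈ 𝔥 := by
  induction N generalizing B with
  | zero => simpa [expProd] using hB
  | succ N ih =>
    rw [expProd_succ, Ring.inverse_mul (.inl (isUnit_exp _)), Ring.inverse_exp]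
    have := ih (X := Fin.tail X) (fun j => hX j.succ) (Fin.tail σ)
      (exp_neg_mul_mul_exp_mem hcl h𝔥 (𝔥.smul_mem (σ 0) (hX 0)) hB)
    simpa only [mul_assoc] using this

theorem expProdFrame_mem {𝔥 : Submodule ℝ E} (hcl : IsClosed (𝔥 : Set E))
    (h𝔥 : ∀ x ∈ 𝔥, ∀ y ∈ 𝔥, x * y - y * x ∈ 𝔥) {X : Fin N → E} (hX : ∀ i, X i ∈ 𝔥)
    (i : Fin N) (σ : Fin N → ℝ) : expProdFrame X i σ ∈ 𝔥 :=
  inverse_expProd_mul_mul_expProd_mem hcl h𝔥 hX _ (hX i)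

theorem contDiff_expProdFrame (X : Fin N → E) (i : Fin N) {n : WithTop ℕ∞} :
    ContDiff ℝ n (expProdFrame X i) := by
  have htrunc : ContDiff ℝ n fun σ : Fin N → ℝ => expProd X fun j => if i < j then σ j else 0 :=
    (contDiff_expProd X).comp <| contDiff_pi.2 fun j => by
      by_cases h : i < j <;> simp [h, contDiff_apply, contDiff_const]
  refine ContDiff.mul (contDiff_iff_contDiffAt.2 fun σ => ?_) htrunc
  exact ((contDiffAt_ringInverse ℝ (isUnit_expProd X _).unit).comp σ htrunc.contDiffAt).mul
    contDiffAt_const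

theorem hasDerivWithinAt_expProd (X : Fin N → E) {τ : ℝ → Fin N → ℝ} {τ' : Fin N → ℝ}
    {s : Set ℝ} {t : ℝ} (hτ : HasDerivWithinAt τ τ' s t) :
    HasDerivWithinAt (fun u => expProd X (τ u))
      (expProd X (τ t) * ∑ i, τ' i • expProdFrame X i (τ t)) s t := by
  induction N with
  | zero => simpa [expProd] using hasDerivWithinAt_const t s (1 : E)
  | succ N ih =>
    have hhead : HasDerivWithinAt (fun u => exp (τ u 0 • X 0))
        (τ' 0 • (X 0 * exp (τ t 0 • X 0))) s t := by
      exact (hasDerivAt_exp_smul_const' (X 0) (τ t 0)).scomp_hasDerivWithinAt t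
        (hasDerivWithinAt_pi.1 hτ 0)
    have htail := ih (Fin.tail X) (τ := fun u => Fin.tail (τ u)) (τ' := Fin.tail τ')
      (hasDerivWithinAt_pi.2 fun j => hasDerivWithinAt_pi.1 hτ j.succ)
    simp only [expProd_succ]
    refine (hhead.mul htail).congr_deriv ?_
    set P := expProd (Fin.tail X) (Fin.tail (τ t))
    have hcomm : exp (τ t 0 • X 0) * X 0 = X 0 * exp (τ t 0 • X 0) :=
      (((Commute.refl (X 0)).smul_left (τ t 0)).exp_left).eq
    rw [Fin.sum_univ_succ, expProdFrame_zero_left, mul_add]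
    congr 1
    · rw [mul_smul_comm, smul_mul_assoc]
      congr 1
      rw [← hcomm, mul_assoc (exp _) P, ← mul_assoc P, ← mul_assoc P,
        Ring.mul_inverse_cancel P (isUnit_expProd _ _), one_mul, mul_assoc]
    · simp only [expProdFrame_succ, mul_assoc]
      rfl

theorem exists_nhds_zero_exp_eq_expProd (𝔥 : Submodule ℝ E)
    (h𝔥 : ∀ x ∈ 𝔥, ∀ y ∈ 𝔥, x * y - y * x ∈ 𝔥) (b : Module.Basis (Fin N) ℝ 𝔥) :
    ∃ U ∈ 𝓝 (0 : E), ∀ Y ∈ 𝔥, Y ∈ U → ∃ τ : Fin N → ℝ, exp Y = expProd (fun i => (b i : E)) τ := by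
  set X : Fin N → E := fun i => b i
  have : FiniteDimensional ℝ 𝔥 := b.finiteDimensional_of_finite
  have hcl : IsClosed (𝔥 : Set E) := 𝔥.closed_of_finiteDimensional
  obtain ⟨P, hP⟩ := (b.equivFunL : 𝔥 →L[ℝ] Fin N → ℝ).exist_extension_of_finiteDimensional_range
  have hPcoord : ∀ Y (hY : Y ∈ 𝔥), P Y = b.equivFun ⟨Y, hY⟩ := fun Y hY =>
    (DFunLike.congr_fun hP ⟨Y, hY⟩).symm
  have hPinj : InjOn P 𝔥 := fun Y hY Y' hY' h => by
    rw [hPcoord Y hY, hPcoord Y' hY'] at h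
    simpa using b.equivFun.injective h
  have hPX : ∀ i, P (expProdFrame X i 0) = Pi.single i 1 := fun i => by
    ext j
    simp [X, hPcoord _ (b i).2, Pi.single_apply, eq_comm]
  refine ⟨_, eventually_exists_hasDerivWithinAt_sum_smul_eq (w := expProdFrame X) hPinj
    (expProdFrame_mem hcl h𝔥 fun i => (b i).2) (fun i => contDiff_expProdFrame X i) hPX,
    fun Y hY hYU => ?_⟩
  obtain ⟨σ, hσ0, hσ⟩ := hYU hY
  refine ⟨σ 1, (eq_exp_of_hasDerivWithinAt_mul (g := fun u => expProd X (σ u))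
    (by simp only [hσ0, expProd_zero]) fun t ht => ?_).symm⟩
  obtain ⟨σ', hσ', hsum⟩ := hσ t ht
  simpa only [hsum] using hasDerivWithinAt_expProd X hσ'

end BanachAlgebra

attribute [local instance 100] LieRing.ofAssociativeRing
attribute [local instance 100] LieAlgebra.ofAssociativeAlgebra

/-- canonical coordinates of the second kind. If X₁, …, X_N is a basis of a
real Lie subalgebra 𝔥 of the n×n complex matrices, then there is a neighbourhood U of 0
such that every Y ∈ 𝔥 ∩ U has exp(Y) = exp(τ₁·X₁)·⋯·exp(τ_N·X_N) for some real τᵢ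
(product taken in this fixed order). -/
theorem stmt8 (n N : ℕ) (𝔥 : LieSubalgebra ℝ (Matrix (Fin n) (Fin n) ℂ))
    (X : Fin N → Matrix (Fin n) (Fin n) ℂ)
    (b : Module.Basis (Fin N) ℝ 𝔥) (hb : ∀ i, (b i : Matrix (Fin n) (Fin n) ℂ) = X i) :
    ∃ U ∈ nhds (0 : Matrix (Fin n) (Fin n) ℂ),
      ∀ Y ∈ 𝔥, Y ∈ U →
        ∃ τ : Fin N → ℝ,
          NormedSpace.exp Y = (List.ofFn fun i => NormedSpace.exp (τ i • X i)).prod := by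
  -- Any algebra norm will do: neither `exp` nor the topology of matrices depends on the choice.
  let : NormedRing (Matrix (Fin n) (Fin n) ℂ) := Matrix.linftyOpNormedRing
  let : NormedAlgebra ℝ (Matrix (Fin n) (Fin n) ℂ) := Matrix.linftyOpNormedAlgebra
  have : CompleteSpace (Matrix (Fin n) (Fin n) ℂ) := FiniteDimensional.complete ℝ _
  obtain rfl : (fun i => (b i : Matrix (Fin n) (Fin n) ℂ)) = X := funext hb
  exact exists_nhds_zero_exp_eq_expProd 𝔥.toSubmodule
    (fun x hx y hy => Ring.lie_def x y ▸ 𝔥.lie_mem hx hy) b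
end
end

section
/- Fix real numbers γₙ, γₑ ≥ 0 with γₙ + γₑ > 0 and κ ∈ ℝ. The fifteen 4×4 complex matrices X̂, Ŷ, Ẑ, K̂_X, K̂_Y, K̂_Z, K̂_XX, K̂_YY, K̂_ZZ, X̂_KK, Ŷ_KK, Ẑ_KK, K̂_XY, K̂_YZ, K̂_ZX are linearly independent over ℝ if and only if γₙ ≠ γₑ. -/
/-!
Pair a matrix `M` with `P` by `trace (P * M)`. Since `trace (A ⊗ₖ B * C ⊗ₖ D) = trace (A * C) * trace (B * D)`
and the quaternion units satisfy `trace (e * e') = -2 δ(e, e')`, the sixteen products `e ⊗ₖ e'` of `𝟙, 𝐢, 𝐣, 𝐤`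
are orthogonal, and pairing extracts coefficients. Applied to a vanishing real combination of the fifteen
matrices, the pairings against `𝐚 ⊗ 𝟙, 𝟙 ⊗ 𝐚, 𝐚 ⊗ 𝐛, 𝐛 ⊗ 𝐚` give, for each axis `𝐚`, a 4 × 4 system whose
determinant is a multiple of `(γₙ - γₑ)(γₙ + γₑ)`; once those coefficients vanish, the pairings against
`𝐚 ⊗ 𝐚` kill the three remaining ones. Conversely, for `γₙ = γₑ` one has `X̂₀ = -X̂_KK` and `Ŷ₀ = -Ŷ_KK`,
so `X̂ + X̂_KK = κ K̂ = Ŷ + Ŷ_KK`.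
-/

open Matrix Kronecker Complex

noncomputable section

/-- The 2×2 identity matrix 𝟙. -/
def m1 : Matrix (Fin 2) (Fin 2) ℂ := 1
/-- The quaternion unit 𝐢 as a 2×2 complex matrix. -/
def mI : Matrix (Fin 2) (Fin 2) ℂ := !![0, Complex.I; Complex.I, 0]
/-- The quaternion unit 𝐣 as a 2×2 complex matrix. -/
def mJ : Matrix (Fin 2) (Fin 2) ℂ := !![0, -1; 1, 0]
/-- The quaternion unit 𝐤 as a 2×2 complex matrix. -/
def mK : Matrix (Fin 2) (Fin 2) ℂ := !![Complex.I, 0; 0, -Complex.I]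

/-- K̂ = (i/2)(𝐢⊗𝐢 + 𝐣⊗𝐣 + 𝐤⊗𝐤). -/
def Khat : Matrix (Fin 2 × Fin 2) (Fin 2 × Fin 2) ℂ :=
  (Complex.I / 2) • (mI ⊗ₖ mI + mJ ⊗ₖ mJ + mK ⊗ₖ mK)

/-- X̂₀ = (1/(γₙ+γₑ))(−γₙ·𝐢⊗𝟙 + γₑ·𝟙⊗𝐢). -/
def Xhat0 (γn γe : ℝ) : Matrix (Fin 2 × Fin 2) (Fin 2 × Fin 2) ℂ :=
  (γn + γe)⁻¹ • ((-γn) • (mI ⊗ₖ m1) + γe • (m1 ⊗ₖ mI))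

/-- Ŷ₀ = (1/(γₙ+γₑ))(γₙ·𝐣⊗𝟙 − γₑ·𝟙⊗𝐣). -/
def Yhat0 (γn γe : ℝ) : Matrix (Fin 2 × Fin 2) (Fin 2 × Fin 2) ℂ :=
  (γn + γe)⁻¹ • (γn • (mJ ⊗ₖ m1) + (-γe) • (m1 ⊗ₖ mJ))

/-- Ẑ₀ = (1/(γₙ+γₑ))(−γₙ·𝐤⊗𝟙 + γₑ·𝟙⊗𝐤). -/
def Zhat0 (γn γe : ℝ) : Matrix (Fin 2 × Fin 2) (Fin 2 × Fin 2) ℂ :=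
  (γn + γe)⁻¹ • ((-γn) • (mK ⊗ₖ m1) + γe • (m1 ⊗ₖ mK))

/-- X̂ = X̂₀ + κ·K̂. -/
def Xhat (γn γe κ : ℝ) : Matrix (Fin 2 × Fin 2) (Fin 2 × Fin 2) ℂ := Xhat0 γn γe + κ • Khat
/-- Ŷ = Ŷ₀ + κ·K̂. -/
def Yhat (γn γe κ : ℝ) : Matrix (Fin 2 × Fin 2) (Fin 2 × Fin 2) ℂ := Yhat0 γn γe + κ • Khat
/-- Ẑ = Ẑ₀ + κ·K̂. -/
def Zhat (γn γe κ : ℝ) : Matrix (Fin 2 × Fin 2) (Fin 2 × Fin 2) ℂ := Zhat0 γn γe + κ • Khat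

/-- K̂_X = (i/2)(−𝐣⊗𝐤 + 𝐤⊗𝐣). -/
def KhatX : Matrix (Fin 2 × Fin 2) (Fin 2 × Fin 2) ℂ :=
  (Complex.I / 2) • (-(mJ ⊗ₖ mK) + mK ⊗ₖ mJ)
/-- K̂_Y = (i/2)(𝐤⊗𝐢 − 𝐢⊗𝐤). -/
def KhatY : Matrix (Fin 2 × Fin 2) (Fin 2 × Fin 2) ℂ :=
  (Complex.I / 2) • (mK ⊗ₖ mI - mI ⊗ₖ mK)
/-- K̂_Z = (i/2)(−𝐢⊗𝐣 + 𝐣⊗𝐢). -/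
def KhatZ : Matrix (Fin 2 × Fin 2) (Fin 2 × Fin 2) ℂ :=
  (Complex.I / 2) • (-(mI ⊗ₖ mJ) + mJ ⊗ₖ mI)
/-- K̂_XX = −(i/2)(𝐣⊗𝐣 + 𝐤⊗𝐤). -/
def KhatXX : Matrix (Fin 2 × Fin 2) (Fin 2 × Fin 2) ℂ :=
  (-(Complex.I / 2)) • (mJ ⊗ₖ mJ + mK ⊗ₖ mK)
/-- K̂_YY = −(i/2)(𝐢⊗𝐢 + 𝐤⊗𝐤). -/
def KhatYY : Matrix (Fin 2 × Fin 2) (Fin 2 × Fin 2) ℂ :=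
  (-(Complex.I / 2)) • (mI ⊗ₖ mI + mK ⊗ₖ mK)
/-- K̂_ZZ = −(i/2)(𝐢⊗𝐢 + 𝐣⊗𝐣). -/
def KhatZZ : Matrix (Fin 2 × Fin 2) (Fin 2 × Fin 2) ℂ :=
  (-(Complex.I / 2)) • (mI ⊗ₖ mI + mJ ⊗ₖ mJ)
/-- L̂_X = −(1/4)(𝐢⊗𝟙 + 𝟙⊗𝐢). -/
def LhatX : Matrix (Fin 2 × Fin 2) (Fin 2 × Fin 2) ℂ :=
  (-(1 / 4 : ℝ)) • (mI ⊗ₖ m1 + m1 ⊗ₖ mI)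
/-- L̂_Y = (1/4)(𝐣⊗𝟙 + 𝟙⊗𝐣). -/
def LhatY : Matrix (Fin 2 × Fin 2) (Fin 2 × Fin 2) ℂ :=
  ((1 / 4 : ℝ)) • (mJ ⊗ₖ m1 + m1 ⊗ₖ mJ)
/-- L̂_Z = −(1/4)(𝐤⊗𝟙 + 𝟙⊗𝐤). -/
def LhatZ : Matrix (Fin 2 × Fin 2) (Fin 2 × Fin 2) ℂ :=
  (-(1 / 4 : ℝ)) • (mK ⊗ₖ m1 + m1 ⊗ₖ mK)
/-- X̂_KK = (1/2)(𝐢⊗𝟙 − 𝟙⊗𝐢). -/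
def XhatKK : Matrix (Fin 2 × Fin 2) (Fin 2 × Fin 2) ℂ :=
  ((1 / 2 : ℝ)) • (mI ⊗ₖ m1 - m1 ⊗ₖ mI)
/-- Ŷ_KK = (1/2)(−𝐣⊗𝟙 + 𝟙⊗𝐣). -/
def YhatKK : Matrix (Fin 2 × Fin 2) (Fin 2 × Fin 2) ℂ :=
  ((1 / 2 : ℝ)) • (-(mJ ⊗ₖ m1) + m1 ⊗ₖ mJ)
/-- Ẑ_KK = (1/2)(𝐤⊗𝟙 − 𝟙⊗𝐤). -/
def ZhatKK : Matrix (Fin 2 × Fin 2) (Fin 2 × Fin 2) ℂ :=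
  ((1 / 2 : ℝ)) • (mK ⊗ₖ m1 - m1 ⊗ₖ mK)
/-- K̂_XY = −(i/(2(γₙ+γₑ)))(γₙ·𝐢⊗𝐣 + γₑ·𝐣⊗𝐢) − (κ/2)(𝐢⊗𝟙 − 𝟙⊗𝐢). -/
def KhatXY (γn γe κ : ℝ) : Matrix (Fin 2 × Fin 2) (Fin 2 × Fin 2) ℂ :=
  (-(Complex.I / (2 * ((γn : ℂ) + (γe : ℂ))))) •
      ((γn : ℂ) • (mI ⊗ₖ mJ) + (γe : ℂ) • (mJ ⊗ₖ mI)) -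
    (κ / 2 : ℝ) • (mI ⊗ₖ m1 - m1 ⊗ₖ mI)
/-- K̂_YZ = −(i/(2(γₙ+γₑ)))(γₙ·𝐣⊗𝐤 + γₑ·𝐤⊗𝐣) − (κ/2)(−𝐣⊗𝟙 + 𝟙⊗𝐣). -/
def KhatYZ (γn γe κ : ℝ) : Matrix (Fin 2 × Fin 2) (Fin 2 × Fin 2) ℂ :=
  (-(Complex.I / (2 * ((γn : ℂ) + (γe : ℂ))))) •
      ((γn : ℂ) • (mJ ⊗ₖ mK) + (γe : ℂ) • (mK ⊗ₖ mJ)) -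
    (κ / 2 : ℝ) • (-(mJ ⊗ₖ m1) + m1 ⊗ₖ mJ)
/-- K̂_ZX = (i/(2(γₙ+γₑ)))(γₙ·𝐤⊗𝐢 + γₑ·𝐢⊗𝐤) − (κ/2)(𝐤⊗𝟙 − 𝟙⊗𝐤). -/
def KhatZX (γn γe κ : ℝ) : Matrix (Fin 2 × Fin 2) (Fin 2 × Fin 2) ℂ :=
  ((Complex.I / (2 * ((γn : ℂ) + (γe : ℂ))))) •
      ((γn : ℂ) • (mK ⊗ₖ mI) + (γe : ℂ) • (mI ⊗ₖ mK)) -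
    (κ / 2 : ℝ) • (mK ⊗ₖ m1 - m1 ⊗ₖ mK)


section Quaternion

@[simp] lemma mI_mul_mI : mI * mI = -1 := by ext i j; fin_cases i <;> fin_cases j <;> simp [mI]
@[simp] lemma mJ_mul_mJ : mJ * mJ = -1 := by ext i j; fin_cases i <;> fin_cases j <;> simp [mJ]
@[simp] lemma mK_mul_mK : mK * mK = -1 := by ext i j; fin_cases i <;> fin_cases j <;> simp [mK]
@[simp] lemma mI_mul_mJ : mI * mJ = mK := by ext i j; fin_cases i <;> fin_cases j <;> simp [mI, mJ, mK]
@[simp] lemma mJ_mul_mI : mJ * mI = -mK := by ext i j; fin_cases i <;> fin_cases j <;> simp [mI, mJ, mK]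
@[simp] lemma mJ_mul_mK : mJ * mK = mI := by ext i j; fin_cases i <;> fin_cases j <;> simp [mI, mJ, mK]
@[simp] lemma mK_mul_mJ : mK * mJ = -mI := by ext i j; fin_cases i <;> fin_cases j <;> simp [mI, mJ, mK]
@[simp] lemma mK_mul_mI : mK * mI = mJ := by ext i j; fin_cases i <;> fin_cases j <;> simp [mI, mJ, mK]
@[simp] lemma mI_mul_mK : mI * mK = -mJ := by ext i j; fin_cases i <;> fin_cases j <;> simp [mI, mJ, mK]

@[simp] lemma m1_mul (A : Matrix (Fin 2) (Fin 2) ℂ) : m1 * A = A := Matrix.one_mul A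
@[simp] lemma mul_m1 (A : Matrix (Fin 2) (Fin 2) ℂ) : A * m1 = A := Matrix.mul_one A

@[simp] lemma trace_m1 : trace m1 = 2 := by norm_num [m1]
@[simp] lemma trace_mI : trace mI = 0 := by simp [mI, trace]
@[simp] lemma trace_mJ : trace mJ = 0 := by simp [mJ, trace]
@[simp] lemma trace_mK : trace mK = 0 := by simp [mK, trace]

end Quaternion

@[simp] lemma trace_kronecker_mul_kronecker {R m n : Type*} [CommSemiring R] [Fintype m] [Fintype n]
    (A C : Matrix m m R) (B D : Matrix n n R) :
    trace (A ⊗ₖ B * C ⊗ₖ D) = trace (A * C) * trace (B * D) := by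
  rw [← mul_kronecker_mul, trace_kronecker]

def generators (γn γe κ : ℝ) : Fin 15 → Matrix (Fin 2 × Fin 2) (Fin 2 × Fin 2) ℂ :=
  ![Xhat γn γe κ, Yhat γn γe κ, Zhat γn γe κ, KhatX, KhatY, KhatZ,
    KhatXX, KhatYY, KhatZZ, XhatKK, YhatKK, ZhatKK,
    KhatXY γn γe κ, KhatYZ γn γe κ, KhatZX γn γe κ]

section Dependence

variable {γ : ℝ} (κ : ℝ) (hγ : γ ≠ 0)
include hγ

lemma Xhat_self_add_XhatKK : Xhat γ γ κ + XhatKK = κ • Khat := by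
  unfold Xhat Xhat0 XhatKK
  match_scalars <;> field_simp <;> ring

lemma Yhat_self_add_YhatKK : Yhat γ γ κ + YhatKK = κ • Khat := by
  unfold Yhat Yhat0 YhatKK
  match_scalars <;> field_simp <;> ring

lemma not_linearIndependent_generators_self : ¬ LinearIndependent ℝ (generators γ γ κ) := by
  intro hli
  have := Fintype.linearIndependent_iff.mp hli ![1, -1, 0, 0, 0, 0, 0, 0, 0, 1, -1, 0, 0, 0, 0]
    (by simp only [generators, Fin.sum_univ_succ, Fin.sum_univ_zero, cons_val_zero, cons_val_succ]
        linear_combination (norm := module) Xhat_self_add_XhatKK κ hγ - Yhat_self_add_YhatKK κ hγ) 0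
  exact one_ne_zero this

end Dependence

lemma ofReal_eq_zero_of_I_mul {x : ℝ} (h : I * x = 0) : x = 0 := by
  exact_mod_cast (mul_eq_zero.mp h).resolve_left I_ne_zero

/-- The pairings of a vanishing combination against `𝐚 ⊗ 𝟙`, `𝟙 ⊗ 𝐚` give `h₁`, `h₂`, and against
`𝐚 ⊗ 𝐛`, `𝐛 ⊗ 𝐚` give `h₃`, `h₄`, whose factor `I` is that of the two-factor generators. -/
lemma sector_eq_zero {γn γe κ a b c d : ℝ} (hs : γn + γe ≠ 0) (hne : γn ≠ γe)
    (h₁ : 2 * (γn : ℂ) / (γn + γe) * a - b + κ * c = 0)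
    (h₂ : 2 * (γe : ℂ) / (γn + γe) * a - b + κ * c = 0)
    (h₃ : I * (d + (γn : ℂ) / (γn + γe) * c) = 0)
    (h₄ : I * (d - (γe : ℂ) / (γn + γe) * c) = 0) :
    a = 0 ∧ b = 0 ∧ c = 0 ∧ d = 0 := by
  replace h₁ : 2 * γn / (γn + γe) * a - b + κ * c = 0 := by exact_mod_cast h₁
  replace h₂ : 2 * γe / (γn + γe) * a - b + κ * c = 0 := by exact_mod_cast h₂
  replace h₃ : d + γn / (γn + γe) * c = 0 := ofReal_eq_zero_of_I_mul (by exact_mod_cast h₃)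
  replace h₄ : d - γe / (γn + γe) * c = 0 := ofReal_eq_zero_of_I_mul (by exact_mod_cast h₄)
  have ha : a = 0 := by
    have : 2 * (γn - γe) / (γn + γe) * a = 0 := by linear_combination h₁ - h₂
    simpa [hs, sub_ne_zero.mpr hne] using this
  have hc : c = 0 := by
    have : (γn + γe) / (γn + γe) * c = 0 := by linear_combination h₃ - h₄
    simpa [hs] using this
  subst ha hc
  exact ⟨rfl, by linarith, rfl, by linarith⟩

section Coefficients

variable {γn γe κ : ℝ} {g : Fin 15 → ℝ} (hg : ∑ i, g i • generators γn γe κ i = 0)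
include hg

attribute [local simp] Xhat Yhat Zhat Xhat0 Yhat0 Zhat0 Khat KhatX KhatY KhatZ KhatXX KhatYY
  KhatZZ XhatKK YhatKK ZhatKK KhatXY KhatYZ KhatZX Matrix.mul_add Matrix.mul_sub

lemma sum_trace_mul_generators_eq_zero (P : Matrix (Fin 2 × Fin 2) (Fin 2 × Fin 2) ℂ) :
    ∑ i, (g i : ℂ) * trace (P * generators γn γe κ i) = 0 := by
  simpa [Finset.mul_sum, trace_sum] using congrArg (fun M => trace (P * M)) hg

lemma x_coeffs_eq_zero (hs : γn + γe ≠ 0) (hne : γn ≠ γe) :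
    g 0 = 0 ∧ g 9 = 0 ∧ g 12 = 0 ∧ g 5 = 0 := by
  have eI1 := sum_trace_mul_generators_eq_zero hg (mI ⊗ₖ m1)
  have e1I := sum_trace_mul_generators_eq_zero hg (m1 ⊗ₖ mI)
  have eIJ := sum_trace_mul_generators_eq_zero hg (mI ⊗ₖ mJ)
  have eJI := sum_trace_mul_generators_eq_zero hg (mJ ⊗ₖ mI)
  simp [Fin.sum_univ_succ, generators, div_mul_eq_div_div] at eI1 e1I eIJ eJI
  exact sector_eq_zero (κ := κ) hs hne (by linear_combination eI1 / 2) (by linear_combination -e1I / 2)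
    (by linear_combination -eIJ / 2) (by linear_combination eJI / 2)

lemma y_coeffs_eq_zero (hs : γn + γe ≠ 0) (hne : γn ≠ γe) :
    g 1 = 0 ∧ g 10 = 0 ∧ g 13 = 0 ∧ g 3 = 0 := by
  have eJ1 := sum_trace_mul_generators_eq_zero hg (mJ ⊗ₖ m1)
  have e1J := sum_trace_mul_generators_eq_zero hg (m1 ⊗ₖ mJ)
  have eJK := sum_trace_mul_generators_eq_zero hg (mJ ⊗ₖ mK)
  have eKJ := sum_trace_mul_generators_eq_zero hg (mK ⊗ₖ mJ)
  simp [Fin.sum_univ_succ, generators, div_mul_eq_div_div] at eJ1 e1J eJK eKJ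
  exact sector_eq_zero (κ := κ) hs hne (by linear_combination -eJ1 / 2) (by linear_combination e1J / 2)
    (by linear_combination -eJK / 2) (by linear_combination eKJ / 2)

lemma z_coeffs_eq_zero (hs : γn + γe ≠ 0) (hne : γn ≠ γe) :
    g 2 = 0 ∧ g 11 = 0 ∧ g 14 = 0 ∧ g 4 = 0 := by
  have eK1 := sum_trace_mul_generators_eq_zero hg (mK ⊗ₖ m1)
  have e1K := sum_trace_mul_generators_eq_zero hg (m1 ⊗ₖ mK)
  have eKI := sum_trace_mul_generators_eq_zero hg (mK ⊗ₖ mI)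
  have eIK := sum_trace_mul_generators_eq_zero hg (mI ⊗ₖ mK)
  simp [Fin.sum_univ_succ, generators, div_mul_eq_div_div] at eK1 e1K eKI eIK
  exact sector_eq_zero (κ := κ) hs hne (by linear_combination eK1 / 2) (by linear_combination -e1K / 2)
    (by linear_combination eKI / 2) (by linear_combination -eIK / 2)

lemma diagonal_coeffs_eq_zero (h0 : g 0 = 0) (h1 : g 1 = 0) (h2 : g 2 = 0) :
    g 6 = 0 ∧ g 7 = 0 ∧ g 8 = 0 := by
  have eII := sum_trace_mul_generators_eq_zero hg (mI ⊗ₖ mI)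
  have eJJ := sum_trace_mul_generators_eq_zero hg (mJ ⊗ₖ mJ)
  have eKK := sum_trace_mul_generators_eq_zero hg (mK ⊗ₖ mK)
  simp [Fin.sum_univ_succ, generators, h0, h1, h2] at eII eJJ eKK
  have h78 : g 7 + g 8 = 0 := ofReal_eq_zero_of_I_mul (by push_cast; linear_combination -eII / 2)
  have h68 : g 6 + g 8 = 0 := ofReal_eq_zero_of_I_mul (by push_cast; linear_combination -eJJ / 2)
  have h67 : g 6 + g 7 = 0 := ofReal_eq_zero_of_I_mul (by push_cast; linear_combination -eKK / 2)
  exact ⟨by linarith, by linarith, by linarith⟩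

end Coefficients

theorem stmt19_general (γn γe κ : ℝ) (hsum : 0 < γn + γe) :
    LinearIndependent ℝ
      ![Xhat γn γe κ, Yhat γn γe κ, Zhat γn γe κ, KhatX, KhatY, KhatZ,
        KhatXX, KhatYY, KhatZZ, XhatKK, YhatKK, ZhatKK,
        KhatXY γn γe κ, KhatYZ γn γe κ, KhatZX γn γe κ] ↔ γn ≠ γe := by
  change LinearIndependent ℝ (generators γn γe κ) ↔ γn ≠ γe
  refine ⟨fun hli heq => ?_, fun hne => Fintype.linearIndependent_iff.mpr fun g hg => ?_⟩
  · subst heq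
    exact not_linearIndependent_generators_self κ (by linarith) hli
  · obtain ⟨h0, h9, h12, h5⟩ := x_coeffs_eq_zero hg hsum.ne' hne
    obtain ⟨h1, h10, h13, h3⟩ := y_coeffs_eq_zero hg hsum.ne' hne
    obtain ⟨h2, h11, h14, h4⟩ := z_coeffs_eq_zero hg hsum.ne' hne
    obtain ⟨h6, h7, h8⟩ := diagonal_coeffs_eq_zero hg h0 h1 h2
    intro i
    fin_cases i <;> assumption

/-- the fifteen matrices X̂, Ŷ, Ẑ, K̂_X, K̂_Y, K̂_Z, K̂_XX, K̂_YY, K̂_ZZ,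
X̂_KK, Ŷ_KK, Ẑ_KK, K̂_XY, K̂_YZ, K̂_ZX are linearly independent over ℝ iff γₙ ≠ γₑ. -/
theorem stmt19 (γn γe κ : ℝ) (hn : 0 ≤ γn) (he : 0 ≤ γe) (hsum : 0 < γn + γe) :
    LinearIndependent ℝ
      ![Xhat γn γe κ, Yhat γn γe κ, Zhat γn γe κ, KhatX, KhatY, KhatZ,
        KhatXX, KhatYY, KhatZZ, XhatKK, YhatKK, ZhatKK,
        KhatXY γn γe κ, KhatYZ γn γe κ, KhatZX γn γe κ] ↔ γn ≠ γe :=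
  stmt19_general γn γe κ hsum
end
end
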